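/- arXiv:2501.16743 — 2 statements merged into one kernel-verified Lean document; each statement's English description precedes it below -/
import Mathlib

section
/- MCF/OD is optimal: if the best-first search over conflict-tree nodes (where each node's cost is the sum over commodities of the cost of its longest assigned routing, and each expansion replaces a commodity's path set by adding its next k-th shortest path) returns a solution, then that solution has minimum cost among all congestion-free solutions reachable in the conflict tree. -/
/-- A conflict-tree node is identified by its vector of per-commodity path
counts; the child relation increments exactly one commodity's count. -/
def ConflictChild {ι : Type*} [DecidableEq ι] (P Q : ι → ℕ) : Prop :=
  ∃ o : ι, Q = Function.update P o (P o + 1)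

/-- The cost of a conflict-tree node: the sum over commodities of the cost of
the longest (i.e. latest added, `k`-th shortest) routing assigned to that
commodity, where `pc o k` is the cost of the `k`-th shortest path of
commodity `o`. -/
def nodeCost {ι : Type*} [Fintype ι] (pc : ι → ℕ → ℝ) (P : ι → ℕ) : ℝ :=
  ∑ o : ι, pc o (P o)

lemma nodeCost_child_le {ι : Type*} [Fintype ι] [DecidableEq ι]
    (pc : ι → ℕ → ℝ) (hmono : ∀ o : ι, Monotone (pc o))
    {A B : ι → ℕ} (h : ConflictChild A B) : nodeCost pc A ≤ nodeCost pc B := by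
  obtain ⟨o, rfl⟩ := h
  unfold nodeCost
  apply Finset.sum_le_sum
  intro i _
  by_cases hi : i = o
  · subst hi; simp only [Function.update_self]; exact hmono i (Nat.le_succ _)
  · simp [Function.update_of_ne hi]

lemma nodeCost_reach_le {ι : Type*} [Fintype ι] [DecidableEq ι]
    (pc : ι → ℕ → ℝ) (hmono : ∀ o : ι, Monotone (pc o))
    {A B : ι → ℕ} (h : Relation.ReflTransGen ConflictChild A B) :
    nodeCost pc A ≤ nodeCost pc B := by
  induction h with
  | refl => exact le_refl _
  | tail _ h2 ih => exact ih.trans (nodeCost_child_le pc hmono h2)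

/-- Optimality of MCF/OD: best-first search over the conflict tree (root assigns
each commodity its shortest path; each expansion adds one commodity's next
`k`-th shortest path, whose cost is nondecreasing in `k`): if the search returns
a solution (the first expanded node whose restricted MCF is feasible, i.e.
congestion-free), that solution has minimum cost among all congestion-free
solutions reachable in the conflict tree. -/
theorem MCF_OD_optimal {ι : Type*} [Fintype ι] [DecidableEq ι]
    (pc : ι → ℕ → ℝ) (hmono : ∀ o : ι, Monotone (pc o))
    (Solution : (ι → ℕ) → Prop)
    (root : ι → ℕ) (hroot : root = fun _ => 1)
    (OPEN : ℕ → Set (ι → ℕ)) (expand : ℕ → (ι → ℕ))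
    (hinit : OPEN 0 = {root})
    (hmem : ∀ t : ℕ, expand t ∈ OPEN t)
    (hmin : ∀ t : ℕ, ∀ P ∈ OPEN t, nodeCost pc (expand t) ≤ nodeCost pc P)
    (hstep : ∀ t : ℕ,
      OPEN (t + 1) = (OPEN t \ {expand t}) ∪ {Q | ConflictChild (expand t) Q})
    (T : ℕ) (hsolT : Solution (expand T)) (hfirst : ∀ t < T, ¬ Solution (expand t))
    (P : ι → ℕ) (hreach : Relation.ReflTransGen ConflictChild root P)
    (hsol : Solution P) :
    nodeCost pc (expand T) ≤ nodeCost pc P := by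
  have inv : ∀ t : ℕ, (∃ s < t, expand s = P) ∨
      (∃ Q ∈ OPEN t, Relation.ReflTransGen ConflictChild Q P) := by
    intro t
    induction t with
    | zero => exact Or.inr ⟨root, by simp [hinit], hreach⟩
    | succ t ih =>
      rcases ih with ⟨s, hs, hsP⟩ | ⟨Q, hQ, hQP⟩
      · exact Or.inl ⟨s, hs.trans (Nat.lt_succ_self t), hsP⟩
      · by_cases hQe : Q = expand t
        · subst hQe
          rcases (Relation.ReflTransGen.cases_head hQP) with rfl | ⟨Q', hQQ', hQ'P⟩
          · exact Or.inl ⟨t, Nat.lt_succ_self t, rfl⟩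
          · exact Or.inr ⟨Q', by rw [hstep t]; exact Or.inr hQQ', hQ'P⟩
        · exact Or.inr ⟨Q, by rw [hstep t]; exact Or.inl ⟨hQ, hQe⟩, hQP⟩
  rcases inv T with ⟨s, hs, hsP⟩ | ⟨Q, hQ, hQP⟩
  · exact absurd (hsP ▸ hsol) (hfirst s hs)
  · exact (hmin T Q hQ).trans (nodeCost_reach_le pc hmono hQP)
end

section
/- For any two commodities routed by flows supported on shortest-path edges, if every shortest path of commodity 1 and every shortest path of commodity 2 passes through a common vertex v, then the influx at v is at least |c_1| + |c_2| minus the demands originating or terminating at v; in particular if v is intermediate for both commodities, influx(v) ≥ |c_1| + |c_2|. -/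
def pathCost {V : Type*} (w : V → V → ℝ) (p : List V) : ℝ :=
  ((p.zip p.tail).map fun e => w e.1 e.2).sum

def IsPath {V : Type*} (A : V → V → Prop) (s g : V) (p : List V) : Prop :=
  p.Chain' A ∧ p.head? = some s ∧ p.getLast? = some g

def inflow {V : Type*} [DecidableEq V] (E : Finset (V × V)) (y : V × V → ℕ) (l : V) : ℕ :=
  ∑ e ∈ E.filter (fun e => e.2 = l), y e

def outflow {V : Type*} [DecidableEq V] (E : Finset (V × V)) (y : V × V → ℕ) (l : V) : ℕ :=
  ∑ e ∈ E.filter (fun e => e.1 = l), y e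

section Aux
variable {V : Type*}

lemma pathCost_nil (w : V → V → ℝ) : pathCost w [] = 0 := rfl

lemma pathCost_singleton (w : V → V → ℝ) (a : V) : pathCost w [a] = 0 := by
  simp [pathCost]

lemma pathCost_cons_cons (w : V → V → ℝ) (a b : V) (t : List V) :
    pathCost w (a :: b :: t) = w a b + pathCost w (b :: t) := by
  simp [pathCost]

lemma chain'_pairs {A : V → V → Prop} :
    ∀ {p : List V}, p.Chain' A → ∀ x ∈ p.zip p.tail, A x.1 x.2 := by
  intro p
  induction p with
  | nil => intro _ x hx; simp at hx
  | cons a t ih =>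
    intro h x hx
    cases t with
    | nil => simp at hx
    | cons b t' =>
      simp only [List.Chain', List.isChain_cons_cons] at h
      simp only [List.tail_cons, List.zip_cons_cons, List.mem_cons] at hx
      rcases hx with rfl | hx
      · exact h.1
      · exact ih h.2 x hx

lemma pathCost_nonneg [DecidableEq V] {E : Finset (V × V)} (w : V → V → ℝ)
    (hpos : ∀ e ∈ E, 0 < w e.1 e.2)
    {p : List V} (hp : p.Chain' (fun a b => (a, b) ∈ E)) : 0 ≤ pathCost w p := by
  apply List.sum_nonneg
  intro x hx
  simp only [List.mem_map] at hx
  obtain ⟨e, he, rfl⟩ := hx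
  exact le_of_lt (hpos e (chain'_pairs hp e he))

lemma singleton_path {A : V → V → Prop} (x : V) : IsPath A x x [x] :=
  ⟨List.isChain_singleton x, rfl, rfl⟩

lemma path_extend {A : V → V → Prop} (w : V → V → ℝ) :
    ∀ (p : List V) (s m l : V), IsPath A s m p → A m l →
      IsPath A s l (p ++ [l]) ∧ pathCost w (p ++ [l]) = pathCost w p + w m l := by
  intro p
  induction p with
  | nil => intro s m l h _; obtain ⟨_, hh, _⟩ := h; simp at hh
  | cons x t ih =>
    intro s m l h hml
    obtain ⟨hc, hh, hg⟩ := h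
    simp only [List.head?_cons, Option.some.injEq] at hh
    subst hh
    cases t with
    | nil =>
      simp only [List.getLast?_singleton, Option.some.injEq] at hg
      subst hg
      refine ⟨⟨?_, rfl, ?_⟩, ?_⟩
      · simp [List.Chain', List.isChain_cons_cons, hml]
      · rfl
      · simp [pathCost_cons_cons, pathCost_singleton]
    | cons x' t' =>
      simp only [List.Chain', List.isChain_cons_cons] at hc
      have hg' : (x' :: t').getLast? = some m := by
        rw [List.getLast?_cons_cons] at hg; exact hg
      obtain ⟨hp', hcost'⟩ := ih x' m l ⟨hc.2, rfl, hg'⟩ hml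
      obtain ⟨hc'', hh'', hg''⟩ := hp'
      refine ⟨⟨?_, rfl, ?_⟩, ?_⟩
      · exact List.isChain_cons_cons.mpr ⟨hc.1, hc''⟩
      · exact hg''
      · simp only [List.cons_append] at hcost' ⊢
        rw [pathCost_cons_cons, pathCost_cons_cons w x x' t', hcost']
        ring

lemma path_concat {A : V → V → Prop} (w : V → V → ℝ) :
    ∀ (q p : List V) (s m g : V), IsPath A s m p → IsPath A m g q →
      IsPath A s g (p ++ q.tail) ∧ pathCost w (p ++ q.tail) = pathCost w p + pathCost w q := by
  intro q
  induction q with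
  | nil => intro p s m g _ h; obtain ⟨_, hh, _⟩ := h; simp at hh
  | cons x t ih =>
    intro p s m g hp hq
    obtain ⟨hc, hh, hg⟩ := hq
    simp only [List.head?_cons, Option.some.injEq] at hh
    subst hh
    cases t with
    | nil =>
      simp only [List.getLast?_singleton, Option.some.injEq] at hg
      subst hg
      simpa [pathCost_singleton] using hp
    | cons x' t' =>
      simp only [List.Chain', List.isChain_cons_cons] at hc
      rw [List.getLast?_cons_cons] at hg
      obtain ⟨hp1, hcost1⟩ := path_extend w p s x x' hp hc.1
      obtain ⟨hp2, hcost2⟩ := ih (p ++ [x']) s x' g hp1 ⟨hc.2, rfl, hg⟩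
      constructor
      · simpa [List.append_assoc] using hp2
      · simp only [List.tail_cons] at hcost2 ⊢
        rw [show p ++ x' :: t' = (p ++ [x']) ++ t' by simp, hcost2, hcost1,
          pathCost_cons_cons]
        ring

lemma myDist_self [DecidableEq V] {E : Finset (V × V)} {w : V → V → ℝ} {dist : V → V → ℝ}
    (hpos : ∀ e ∈ E, 0 < w e.1 e.2)
    (hdist_lb : ∀ u v : V, ∀ p : List V,
      IsPath (fun a b => (a, b) ∈ E) u v p → dist u v ≤ pathCost w p)
    (hdist_attained : ∀ u v : V, (∃ p : List V, IsPath (fun a b => (a, b) ∈ E) u v p) →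
      ∃ p : List V, IsPath (fun a b => (a, b) ∈ E) u v p ∧ pathCost w p = dist u v)
    (x : V) : dist x x = 0 := by
  have h1 : dist x x ≤ 0 := by
    have := hdist_lb x x [x] (singleton_path x)
    simpa [pathCost_singleton] using this
  obtain ⟨p, hp, hc⟩ := hdist_attained x x ⟨[x], singleton_path x⟩
  have h2 : 0 ≤ dist x x := hc ▸ pathCost_nonneg w hpos hp.1
  linarith

lemma myDist_triangle [DecidableEq V] {E : Finset (V × V)} {w : V → V → ℝ} {dist : V → V → ℝ}
    (hdist_lb : ∀ u v : V, ∀ p : List V,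
      IsPath (fun a b => (a, b) ∈ E) u v p → dist u v ≤ pathCost w p)
    (hdist_attained : ∀ u v : V, (∃ p : List V, IsPath (fun a b => (a, b) ∈ E) u v p) →
      ∃ p : List V, IsPath (fun a b => (a, b) ∈ E) u v p ∧ pathCost w p = dist u v)
    {s x g : V} (h1 : ∃ p, IsPath (fun a b => (a, b) ∈ E) s x p)
    (h2 : ∃ p, IsPath (fun a b => (a, b) ∈ E) x g p) :
    dist s g ≤ dist s x + dist x g := by
  obtain ⟨p, hp, hpc⟩ := hdist_attained s x h1
  obtain ⟨q, hq, hqc⟩ := hdist_attained x g h2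
  obtain ⟨hpq, hpqc⟩ := path_concat w q p s x g hp hq
  have := hdist_lb s g _ hpq
  rw [hpqc, hpc, hqc] at this
  exact this

lemma reach_path {R : V → V → Prop} {s x : V} (h : Relation.ReflTransGen R s x) :
    ∃ p, IsPath R s x p := by
  induction h with
  | refl => exact ⟨[s], singleton_path s⟩
  | @tail b c _ hbc ih =>
    obtain ⟨p, hp⟩ := ih
    exact ⟨p ++ [c], (path_extend (fun _ _ => (0 : ℝ)) p s b c hp hbc).1⟩

lemma not_mem_of_chain' {R : V → V → Prop} {v : V} (hR : ∀ a b, R a b → b ≠ v) :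
    ∀ (p : List V) (a : V), p.Chain' R → p.head? = some a → a ≠ v → v ∉ p := by
  intro p
  induction p with
  | nil => intro a _ hh; simp at hh
  | cons x t ih =>
    intro a hc hh hav hmem
    simp only [List.head?_cons, Option.some.injEq] at hh
    subst hh
    rcases List.mem_cons.mp hmem with rfl | hmem
    · exact hav rfl
    · cases t with
      | nil => simp at hmem
      | cons b t' =>
        simp only [List.Chain', List.isChain_cons_cons] at hc
        exact ih b hc.2 rfl (hR _ _ hc.1) hmem

end Aux

lemma telescope {V : Type*} [DecidableEq V] {E : Finset (V × V)} {w dist : V → V → ℝ}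
    {y : V × V → ℕ} {s g : V}
    (hdist_lb : ∀ u v : V, ∀ p : List V,
      IsPath (fun a b => (a, b) ∈ E) u v p → dist u v ≤ pathCost w p)
    (hdist_attained : ∀ u v : V, (∃ p : List V, IsPath (fun a b => (a, b) ∈ E) u v p) →
      ∃ p : List V, IsPath (fun a b => (a, b) ∈ E) u v p ∧ pathCost w p = dist u v)
    (hsupp : ∀ m l : V, 0 < y (m, l) →
      (m, l) ∈ E ∧ dist s m + w m l + dist l g = dist s g) :
    ∀ (r : List V) (m : V) (a : List V),
      (m :: r).Chain' (fun x z => 0 < y (x, z)) → (m :: r).getLast? = some g →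
      IsPath (fun a b => (a, b) ∈ E) s m a → pathCost w a = dist s m →
      IsPath (fun a b => (a, b) ∈ E) s g (a ++ r) ∧ pathCost w (a ++ r) = dist s g := by
  intro r
  induction r with
  | nil =>
    intro m a _ hg ha hca
    simp only [List.getLast?_singleton, Option.some.injEq] at hg
    subst hg
    simpa using ⟨ha, hca⟩
  | cons l r' ih =>
    intro m a hc hg ha hca
    simp only [List.Chain', List.isChain_cons_cons] at hc
    rw [List.getLast?_cons_cons] at hg
    obtain ⟨hE, heq⟩ := hsupp m l hc.1
    obtain ⟨ha', hca'⟩ := path_extend w a s m l ha hE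
    have hlg : IsPath (fun a b => (a, b) ∈ E) l g (l :: r') :=
      ⟨(hc.2).imp (fun a b h => (hsupp a b h).1), rfl, hg⟩
    have h1 : dist s l ≤ pathCost w a + w m l := by
      have := hdist_lb s l _ ha'; rwa [hca'] at this
    have h2 : dist s g ≤ dist s l + dist l g :=
      myDist_triangle hdist_lb hdist_attained ⟨_, ha'⟩ ⟨_, hlg⟩
    have hdl : pathCost w (a ++ [l]) = dist s l := by
      rw [hca', hca]; rw [hca] at h1; linarith
    obtain ⟨hp, hcost⟩ := ih l (a ++ [l]) hc.2 hg ha' hdl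
    rw [show a ++ l :: r' = (a ++ [l]) ++ r' by simp]
    exact ⟨hp, hcost⟩

lemma key_lemma {V : Type*} [Fintype V] [DecidableEq V]
    (E : Finset (V × V)) (w dist : V → V → ℝ)
    (hpos : ∀ e ∈ E, 0 < w e.1 e.2)
    (hdist_lb : ∀ u v : V, ∀ p : List V,
      IsPath (fun a b => (a, b) ∈ E) u v p → dist u v ≤ pathCost w p)
    (hdist_attained : ∀ u v : V, (∃ p : List V, IsPath (fun a b => (a, b) ∈ E) u v p) →
      ∃ p : List V, IsPath (fun a b => (a, b) ∈ E) u v p ∧ pathCost w p = dist u v)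
    (s g : V) (d : ℕ) (y : V × V → ℕ)
    (hcons : ∀ l : V, (inflow E y l : ℤ) - outflow E y l =
      if l = g then (d : ℤ) else if l = s then -(d : ℤ) else 0)
    (hsupp : ∀ m l : V, 0 < y (m, l) →
      (m, l) ∈ E ∧ dist s m + w m l + dist l g = dist s g)
    (v : V)
    (hv : ∀ p : List V, IsPath (fun a b => (a, b) ∈ E) s g p →
      pathCost w p = dist s g → v ∈ p)
    (hvs : v ≠ s) (_hvg : v ≠ g) : d ≤ inflow E y v := by
  classical
  set R : V → V → Prop := fun m l => 0 < y (m, l) ∧ l ≠ v with hR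
  set S : Finset V := Finset.univ.filter (fun x => Relation.ReflTransGen R s x) with hS
  have hmemS : ∀ x, x ∈ S ↔ Relation.ReflTransGen R s x := by
    intro x; simp [hS]
  have hsS : s ∈ S := (hmemS s).mpr Relation.ReflTransGen.refl
  have hgS : g ∉ S := by
    intro hg
    obtain ⟨p, hp⟩ := reach_path ((hmemS g).mp hg)
    obtain ⟨hc, hh, hgl⟩ := hp
    have hvp : v ∉ p :=
      not_mem_of_chain' (fun a b h => h.2) p s hc hh (Ne.symm hvs)
    cases p with
    | nil => simp at hh
    | cons x t =>
      simp only [List.head?_cons, Option.some.injEq] at hh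
      subst hh
      have hch : (x :: t).Chain' (fun a b => 0 < y (a, b)) := hc.imp (fun a b h => h.1)
      have hss : dist x x = 0 := myDist_self hpos hdist_lb hdist_attained x
      obtain ⟨hp2, hcost2⟩ := telescope hdist_lb hdist_attained hsupp t x [x] hch hgl
        (singleton_path x) (by rw [pathCost_singleton, hss])
      exact hvp (hv ([x] ++ t) hp2 hcost2)
  have h1 : ∀ x, (inflow E y x : ℤ) = ∑ e ∈ E, (if e.2 = x then (y e : ℤ) else 0) := by
    intro x; rw [inflow, Finset.sum_filter]; push_cast; rfl
  have h2 : ∀ x, (outflow E y x : ℤ) = ∑ e ∈ E, (if e.1 = x then (y e : ℤ) else 0) := by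
    intro x; rw [outflow, Finset.sum_filter]; push_cast; rfl
  have hsum : ∑ x ∈ Sᶜ, ((inflow E y x : ℤ) - outflow E y x) = d := by
    rw [Finset.sum_congr rfl (fun x _ => hcons x),
      Finset.sum_eq_single_of_mem g (Finset.mem_compl.mpr hgS)
        (fun b hb hbg => by
          rw [if_neg hbg, if_neg]
          intro hbs
          exact (Finset.mem_compl.mp hb) (hbs ▸ hsS)),
      if_pos rfl]
  have hswap : ∑ x ∈ Sᶜ, ((inflow E y x : ℤ) - outflow E y x)
      = ∑ e ∈ E, ((if e.2 ∈ Sᶜ then (y e : ℤ) else 0) - (if e.1 ∈ Sᶜ then (y e : ℤ) else 0)) := by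
    simp_rw [h1, h2, ← Finset.sum_sub_distrib]
    rw [Finset.sum_comm]
    refine Finset.sum_congr rfl (fun e _ => ?_)
    rw [Finset.sum_sub_distrib, Finset.sum_ite_eq Sᶜ e.2 (fun _ => (y e : ℤ)),
      Finset.sum_ite_eq Sᶜ e.1 (fun _ => (y e : ℤ))]
  have hbound : ∀ e ∈ E,
      ((if e.2 ∈ Sᶜ then (y e : ℤ) else 0) - (if e.1 ∈ Sᶜ then (y e : ℤ) else 0))
        ≤ (if e.2 = v then (y e : ℤ) else 0) := by
    intro e _
    have hyn : (0 : ℤ) ≤ (y e : ℤ) := Int.natCast_nonneg _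
    by_cases h2v : e.2 = v
    · rw [if_pos h2v]
      split_ifs <;> omega
    · rw [if_neg h2v]
      by_cases hA : e.2 ∈ Sᶜ
      · by_cases hB : e.1 ∈ Sᶜ
        · rw [if_pos hA, if_pos hB]; omega
        · have hB' : e.1 ∈ S := by simpa [Finset.mem_compl] using hB
          have hy0 : y e = 0 := by
            by_contra hy
            have hy' : 0 < y (e.1, e.2) := by
              have : 0 < y e := Nat.pos_of_ne_zero hy
              simpa using this
            have : e.2 ∈ S := (hmemS _).mpr (((hmemS _).mp hB').tail ⟨hy', h2v⟩)
            exact (Finset.mem_compl.mp hA) this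
          simp [hy0]
      · rw [if_neg hA]
        split_ifs <;> omega
  have hfinal : (d : ℤ) ≤ ∑ e ∈ E, (if e.2 = v then (y e : ℤ) else 0) := by
    rw [← hsum, hswap]
    exact Finset.sum_le_sum hbound
  rw [← h1 v] at hfinal
  exact_mod_cast hfinal

/-- For two commodities routed by flows supported on shortest-path edges, if
every shortest path of commodity 1 and every shortest path of commodity 2
passes through a common vertex `v`, then the influx at `v` (flow entering `v`,
counted only for commodities for which `v` is intermediate) is at least
`d₁ + d₂` minus the demands originating or terminating at `v`; in particular,
if `v` is intermediate for both commodities, `influx v ≥ d₁ + d₂`. -/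
theorem common_vertex_influx_lower_bound {V : Type*} [Fintype V] [DecidableEq V]
    (E : Finset (V × V)) (w : V → V → ℝ) (dist : V → V → ℝ)
    (hpos : ∀ e ∈ E, 0 < w e.1 e.2)
    (hdist_lb : ∀ u v : V, ∀ p : List V,
      IsPath (fun a b => (a, b) ∈ E) u v p → dist u v ≤ pathCost w p)
    (hdist_attained : ∀ u v : V, (∃ p : List V, IsPath (fun a b => (a, b) ∈ E) u v p) →
      ∃ p : List V, IsPath (fun a b => (a, b) ∈ E) u v p ∧ pathCost w p = dist u v)
    (s₁ g₁ s₂ g₂ : V) (d₁ d₂ : ℕ) (y₁ y₂ : V × V → ℕ)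
    (hcons₁ : ∀ l : V, (inflow E y₁ l : ℤ) - outflow E y₁ l =
      if l = g₁ then (d₁ : ℤ) else if l = s₁ then -(d₁ : ℤ) else 0)
    (hcons₂ : ∀ l : V, (inflow E y₂ l : ℤ) - outflow E y₂ l =
      if l = g₂ then (d₂ : ℤ) else if l = s₂ then -(d₂ : ℤ) else 0)
    (hsupp₁ : ∀ m l : V, 0 < y₁ (m, l) →
      (m, l) ∈ E ∧ dist s₁ m + w m l + dist l g₁ = dist s₁ g₁)
    (hsupp₂ : ∀ m l : V, 0 < y₂ (m, l) →
      (m, l) ∈ E ∧ dist s₂ m + w m l + dist l g₂ = dist s₂ g₂)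
    (v : V)
    (hv₁ : ∀ p : List V, IsPath (fun a b => (a, b) ∈ E) s₁ g₁ p →
      pathCost w p = dist s₁ g₁ → v ∈ p)
    (hv₂ : ∀ p : List V, IsPath (fun a b => (a, b) ∈ E) s₂ g₂ p →
      pathCost w p = dist s₂ g₂ → v ∈ p) :
    (d₁ + d₂)
      - (if v = s₁ ∨ v = g₁ then d₁ else 0)
      - (if v = s₂ ∨ v = g₂ then d₂ else 0) ≤
      (if v ≠ s₁ ∧ v ≠ g₁ then inflow E y₁ v else 0)
        + (if v ≠ s₂ ∧ v ≠ g₂ then inflow E y₂ v else 0) ∧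
    ((v ≠ s₁ ∧ v ≠ g₁ ∧ v ≠ s₂ ∧ v ≠ g₂) →
      d₁ + d₂ ≤ inflow E y₁ v + inflow E y₂ v) := by
  have k1 : v ≠ s₁ → v ≠ g₁ → d₁ ≤ inflow E y₁ v := fun h h' =>
    key_lemma E w dist hpos hdist_lb hdist_attained s₁ g₁ d₁ y₁ hcons₁ hsupp₁ v hv₁ h h'
  have k2 : v ≠ s₂ → v ≠ g₂ → d₂ ≤ inflow E y₂ v := fun h h' =>
    key_lemma E w dist hpos hdist_lb hdist_attained s₂ g₂ d₂ y₂ hcons₂ hsupp₂ v hv₂ h h'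
  constructor
  · by_cases hA : v = s₁ ∨ v = g₁ <;> by_cases hB : v = s₂ ∨ v = g₂
    · rw [if_pos hA, if_pos hB, if_neg (by tauto), if_neg (by tauto)]
      omega
    · have h2 := k2 (fun h => hB (Or.inl h)) (fun h => hB (Or.inr h))
      rw [if_pos hA, if_neg hB, if_neg (show ¬(v ≠ s₁ ∧ v ≠ g₁) by tauto),
        if_pos (show v ≠ s₂ ∧ v ≠ g₂ by tauto)]
      omega
    · have h1 := k1 (fun h => hA (Or.inl h)) (fun h => hA (Or.inr h))
      rw [if_neg hA, if_pos hB, if_pos (show v ≠ s₁ ∧ v ≠ g₁ by tauto),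
        if_neg (show ¬(v ≠ s₂ ∧ v ≠ g₂) by tauto)]
      omega
    · have h1 := k1 (fun h => hA (Or.inl h)) (fun h => hA (Or.inr h))
      have h2 := k2 (fun h => hB (Or.inl h)) (fun h => hB (Or.inr h))
      rw [if_neg hA, if_neg hB, if_pos (show v ≠ s₁ ∧ v ≠ g₁ by tauto),
        if_pos (show v ≠ s₂ ∧ v ≠ g₂ by tauto)]
      omega
  · rintro ⟨ha, hb, hc, hd⟩
    exact Nat.add_le_add (k1 ha hb) (k2 hc hd)
end
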